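/- arXiv:2204.08991 — 2 statements merged into one kernel-verified Lean document; each statement's English description precedes it below -/
import Mathlib

section
/- For the square [−1,1]² floating with three submerged corners, waterline through (x_R,1) on the top side and (−1,y_L) on the left side with 0 < θ < π/2 and submerged area 4R (R ≥ 1/2), the feasibility constraints 0 ≤ 1 + x_R ≤ 2 and −1 ≤ y_L ≤ 1 are equivalent to 2 − 2R ≤ tanθ ≤ 1/(2 − 2R). -/
open Real

/-! With `s = 1 + x_R`, `t = tan θ` and `c = 2 - 2R > 0`, Archimedes' principle reads `s² t = 4c`
and the waterline gives `y_L = 1 - s t`. Since `s, t ≥ 0`, the constraint `y_L ≤ 1` is automatic,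
`s ≤ 2` is equivalent to `s² t ≤ 4t`, i.e. `c ≤ t`, and `y_L ≥ -1`, i.e. `s t ≤ 2`, is equivalent to
`(s t)² = 4ct ≤ 4`, i.e. `t ≤ 1/c`. -/

section

variable {s t c : ℝ}

lemma le_two_iff_le_of_sq_mul_eq (hs : 0 ≤ s) (ht : 0 < t) (h : s ^ 2 * t = 4 * c) :
    s ≤ 2 ↔ c ≤ t := by
  calc s ≤ 2 ↔ s ^ 2 ≤ 2 ^ 2 := (pow_le_pow_iff_left₀ hs zero_le_two two_ne_zero).symm
    _ ↔ s ^ 2 * t ≤ 4 * t := by rw [mul_le_mul_iff_left₀ ht]; norm_num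
    _ ↔ c ≤ t := by rw [h]; constructor <;> intro <;> linarith

lemma mul_le_two_iff_le_one_div_of_sq_mul_eq (hs : 0 ≤ s) (ht : 0 < t) (hc : 0 < c)
    (h : s ^ 2 * t = 4 * c) : s * t ≤ 2 ↔ t ≤ 1 / c := by
  have hst : 0 ≤ s * t := mul_nonneg hs ht.le
  calc s * t ≤ 2 ↔ (s * t) ^ 2 ≤ 2 ^ 2 :=
        (pow_le_pow_iff_left₀ hst zero_le_two two_ne_zero).symm
    _ ↔ 4 * c * t ≤ 4 := by rw [show (s * t) ^ 2 = s ^ 2 * t * t by ring, h]; norm_num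
    _ ↔ t ≤ 1 / c := by rw [le_div_iff₀ hc]; constructor <;> intro <;> linarith

end

/-- Feasibility range of the waterline slope for the square `[-1,1]²` floating
with three submerged corners (`R ≥ 1/2`): the geometric constraints
`0 ≤ 1 + x_R ≤ 2` and `-1 ≤ y_L ≤ 1` are equivalent to
`2 - 2R ≤ tan θ ≤ 1/(2 - 2R)`. -/
theorem square_adjacent_sides_angle_range (θ R xR yL : ℝ)
    (hθ : θ ∈ Set.Ioo (0:ℝ) (Real.pi / 2))
    (hR : R ∈ Set.Ico (1/2 : ℝ) 1)
    (hxR : 0 ≤ 1 + xR)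
    (h1 : (1 + xR) ^ 2 = (8 - 8 * R) / Real.tan θ)
    (hyL : yL = -(1 + xR) * Real.tan θ + 1) :
    (0 ≤ 1 + xR ∧ 1 + xR ≤ 2 ∧ -1 ≤ yL ∧ yL ≤ 1) ↔
      (2 - 2 * R ≤ Real.tan θ ∧ Real.tan θ ≤ 1 / (2 - 2 * R)) := by
  have ht : 0 < tan θ := tan_pos_of_pos_of_lt_pi_div_two hθ.1 hθ.2
  have hc : 0 < 2 - 2 * R := by linarith [hR.2]
  have harea : (1 + xR) ^ 2 * tan θ = 4 * (2 - 2 * R) := by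
    rw [h1, div_mul_cancel₀ _ ht.ne']; ring
  rw [← le_two_iff_le_of_sq_mul_eq hxR ht harea,
    ← mul_le_two_iff_le_one_div_of_sq_mul_eq hxR ht hc harea, hyL]
  have hst : 0 ≤ (1 + xR) * tan θ := mul_nonneg hxR ht.le
  constructor
  · rintro ⟨-, hs, hyL_ge, -⟩
    exact ⟨hs, by linarith⟩
  · rintro ⟨hs, hst_le⟩
    exact ⟨hxR, hs, by linarith, by linarith⟩
end

section
/- Let R ∈ [1/2, 1) and θ with 2 − 2R ≤ tanθ ≤ 1/(2 − 2R). The centroid of the submerged pentagon with vertices (x_R,1), (−1,y_L), (−1,−1), (1,−1), (1,1), where (1 + x_R)² = (8 − 8R)/tanθ and y_L = −(1 + x_R)tanθ + 1, equals (1/(4R))·( 1 − (y_L + 1)/2 − ((x_R³ + 1)/6)tanθ, −1 + (1 − x_R)/2 + (1 − y_L³)/(6 tanθ) ). -/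
open MeasureTheory Real

lemma aux_fubini (g : ℝ → ℝ) (hg : Continuous g)
    (hgb : ∀ x ∈ Set.Icc (-1:ℝ) 1, g x ≤ 1)
    (f : ℝ × ℝ → ℝ) (hf : Continuous f) :
    (∫ p in {p : ℝ × ℝ | p.1 ∈ Set.Icc (-1:ℝ) 1 ∧ p.2 ∈ Set.Icc (-1:ℝ) (g p.1)}, f p ∂volume)
      = ∫ x in Set.Icc (-1:ℝ) 1, ∫ y in Set.Icc (-1:ℝ) (g x), f (x, y) := by
  set S := {p : ℝ × ℝ | p.1 ∈ Set.Icc (-1:ℝ) 1 ∧ p.2 ∈ Set.Icc (-1:ℝ) (g p.1)} with hSdef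
  have hS : MeasurableSet S := by
    have : S = (Set.Icc (-1:ℝ) 1 ×ˢ Set.Ici (-1:ℝ)) ∩ {p : ℝ × ℝ | p.2 ≤ g p.1} := by
      ext p; simp [hSdef, Set.mem_Icc, and_assoc]
    rw [this]
    exact (measurableSet_Icc.prod measurableSet_Ici).inter
      (measurableSet_le measurable_snd (hg.measurable.comp measurable_fst))
  have hsub : S ⊆ Set.Icc (-1:ℝ) 1 ×ˢ Set.Icc (-1:ℝ) 1 := by
    rintro ⟨x, y⟩ ⟨hx, hy⟩
    exact ⟨hx, hy.1, hy.2.trans (hgb x hx)⟩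
  have hfi : IntegrableOn f S volume :=
    (hf.continuousOn.integrableOn_compact (isCompact_Icc.prod isCompact_Icc)).mono_set hsub
  rw [← integral_indicator hS]
  rw [Measure.volume_eq_prod]
  rw [MeasureTheory.integral_prod]
  · rw [← integral_indicator (measurableSet_Icc : MeasurableSet (Set.Icc (-1:ℝ) 1))]
    congr 1
    funext x
    by_cases hx : x ∈ Set.Icc (-1:ℝ) 1
    · have : ∀ y, S.indicator f (x, y) = (Set.Icc (-1:ℝ) (g x)).indicator (fun y => f (x, y)) y := by
        intro y
        by_cases hy : y ∈ Set.Icc (-1:ℝ) (g x)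
        · rw [Set.indicator_of_mem hy, Set.indicator_of_mem (by exact ⟨hx, hy⟩)]
        · rw [Set.indicator_of_notMem hy, Set.indicator_of_notMem (by
            intro h; exact hy h.2)]
      simp only [this]
      rw [integral_indicator measurableSet_Icc, Set.indicator_of_mem hx]
    · have : ∀ y, S.indicator f (x, y) = 0 := by
        intro y
        apply Set.indicator_of_notMem
        intro h; exact hx h.1
      simp only [this, integral_zero]
      rw [Set.indicator_of_notMem hx]
  · rw [← Measure.volume_eq_prod]
    rwa [integrable_indicator_iff hS]

/-- Center of buoyancy of the submerged pentagon with vertices `(x_R,1)`,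
`(-1,y_L)`, `(-1,-1)`, `(1,-1)`, `(1,1)` for the square `[-1,1]²` with three
corners below the waterline `y = (x - x_R) tan θ + 1`. -/
theorem square_three_corners_center_of_buoyancy (θ R xR yL : ℝ)
    (hR : R ∈ Set.Ico (1/2 : ℝ) 1)
    (hθ : 2 - 2 * R ≤ Real.tan θ ∧ Real.tan θ ≤ 1 / (2 - 2 * R))
    (hθ' : θ ∈ Set.Ioo (0:ℝ) (Real.pi / 2))
    (hxR : 0 ≤ 1 + xR)
    (h1 : (1 + xR) ^ 2 = (8 - 8 * R) / Real.tan θ)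
    (hyL : yL = -(1 + xR) * Real.tan θ + 1) :
    ((1 / (4 * R)) * ∫ p in {p : ℝ × ℝ | p.1 ∈ Set.Icc (-1:ℝ) 1 ∧
        p.2 ∈ Set.Icc (-1:ℝ) 1 ∧ p.2 ≤ (p.1 - xR) * Real.tan θ + 1}, p.1 ∂volume,
     (1 / (4 * R)) * ∫ p in {p : ℝ × ℝ | p.1 ∈ Set.Icc (-1:ℝ) 1 ∧
        p.2 ∈ Set.Icc (-1:ℝ) 1 ∧ p.2 ≤ (p.1 - xR) * Real.tan θ + 1}, p.2 ∂volume) =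
    (1 / (4 * R)) •
      ((1 - (yL + 1) / 2 - ((xR ^ 3 + 1) / 6) * Real.tan θ,
        -1 + (1 - xR) / 2 + (1 - yL ^ 3) / (6 * Real.tan θ)) : ℝ × ℝ) := by
  obtain ⟨hR2, hR1⟩ := hR
  obtain ⟨ht1, ht2⟩ := hθ
  set t := Real.tan θ with htdef
  have ht : 0 < t := Real.tan_pos_of_pos_of_lt_pi_div_two hθ'.1 hθ'.2
  have h2R : (0:ℝ) < 2 - 2 * R := by linarith
  have hsq : (1 + xR) ^ 2 ≤ 4 := by
    rw [h1, div_le_iff₀ ht]; nlinarith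
  have hxR1 : xR ≤ 1 := by nlinarith
  have hPt : (1 + xR) * t ≤ 2 := by
    have h2 : ((1 + xR) * t) ^ 2 ≤ 4 := by
      have e : ((1 + xR) * t) ^ 2 = (8 - 8 * R) * t := by
        rw [mul_pow, h1]; field_simp
      rw [e]
      have h3 : t * (2 - 2 * R) ≤ 1 := by
        rw [← le_div_iff₀ h2R]; exact ht2
      nlinarith
    nlinarith [mul_nonneg hxR ht.le]
  have hyL1 : -1 ≤ yL := by rw [hyL]; linarith
  set g : ℝ → ℝ := fun x => min 1 ((x - xR) * t + 1) with hgdef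
  have hlin : Continuous (fun x : ℝ => (x - xR) * t + 1) :=
    ((continuous_id.sub continuous_const).mul continuous_const).add continuous_const
  have hgc : Continuous g := continuous_const.min hlin
  have hgb : ∀ x ∈ Set.Icc (-1:ℝ) 1, g x ≤ 1 := fun x _ => min_le_left _ _
  have hgm : ∀ x ∈ Set.Icc (-1:ℝ) 1, -1 ≤ g x := by
    intro x hx
    refine le_min (by norm_num) ?_
    have hx1 : -1 ≤ x := hx.1
    nlinarith
  have hset : {p : ℝ × ℝ | p.1 ∈ Set.Icc (-1:ℝ) 1 ∧
      p.2 ∈ Set.Icc (-1:ℝ) 1 ∧ p.2 ≤ (p.1 - xR) * t + 1}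
      = {p : ℝ × ℝ | p.1 ∈ Set.Icc (-1:ℝ) 1 ∧ p.2 ∈ Set.Icc (-1:ℝ) (g p.1)} := by
    ext p
    simp only [Set.mem_setOf_eq, Set.mem_Icc, hgdef, le_min_iff]
    tauto
  rw [hset]
  rw [aux_fubini g hgc hgb (fun p => p.1) continuous_fst,
      aux_fubini g hgc hgb (fun p => p.2) continuous_snd]
  -- inner integrals
  have hIx : (∫ x in Set.Icc (-1:ℝ) 1, ∫ y in Set.Icc (-1:ℝ) (g x), ((x, y) : ℝ × ℝ).1)
      = ∫ x in Set.Icc (-1:ℝ) 1, x * (g x + 1) := by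
    refine setIntegral_congr_fun measurableSet_Icc (fun x hx => ?_)
    simp only
    rw [setIntegral_const, Real.volume_real_Icc_of_le (by linarith [hgm x hx]),
      smul_eq_mul]
    ring
  have hIy : (∫ x in Set.Icc (-1:ℝ) 1, ∫ y in Set.Icc (-1:ℝ) (g x), ((x, y) : ℝ × ℝ).2)
      = ∫ x in Set.Icc (-1:ℝ) 1, ((g x) ^ 2 - 1) / 2 := by
    refine setIntegral_congr_fun measurableSet_Icc (fun x hx => ?_)
    simp only
    rw [integral_Icc_eq_integral_Ioc, ← intervalIntegral.integral_of_le (hgm x hx)]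
    have p : (∫ y in (-1:ℝ)..(g x), y) = (g x) ^ 2 / 2 - (-1:ℝ) ^ 2 / 2 := by
      refine intervalIntegral.integral_eq_sub_of_hasDerivAt (f := fun y : ℝ => y ^ 2 / 2)
        (fun y _ => by simpa using (hasDerivAt_pow 2 y).div_const 2)
        (Continuous.intervalIntegrable (by fun_prop) _ _)
    rw [p]; norm_num; ring
  rw [hIx, hIy]
  have hxRm : (-1:ℝ) ≤ xR := by linarith
  -- x-integral
  have hGx : Continuous (fun x : ℝ => x * (g x + 1)) :=
    continuous_id.mul (hgc.add continuous_const)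
  have hvx : (∫ x in Set.Icc (-1:ℝ) 1, x * (g x + 1))
      = t / 3 + t * xR / 2 - t * xR ^ 3 / 6 := by
    rw [integral_Icc_eq_integral_Ioc, ← intervalIntegral.integral_of_le (by norm_num : (-1:ℝ) ≤ 1)]
    rw [← intervalIntegral.integral_add_adjacent_intervals
      (hGx.intervalIntegrable (-1) xR) (hGx.intervalIntegrable xR 1)]
    have e1 : (∫ x in (-1:ℝ)..xR, x * (g x + 1))
        = ∫ x in (-1:ℝ)..xR, (t * x ^ 2 + (2 - t * xR) * x) := by
      refine intervalIntegral.integral_congr (fun x hx => ?_)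
      rw [Set.uIcc_of_le hxRm] at hx
      have : g x = (x - xR) * t + 1 := by
        apply min_eq_right; nlinarith [hx.2]
      rw [this]; ring
    have e2 : (∫ x in xR..(1:ℝ), x * (g x + 1)) = ∫ x in xR..(1:ℝ), 2 * x := by
      refine intervalIntegral.integral_congr (fun x hx => ?_)
      rw [Set.uIcc_of_le hxR1] at hx
      have : g x = 1 := by
        apply min_eq_left; nlinarith [hx.1]
      rw [this]; ring
    have p1 : (∫ x in (-1:ℝ)..xR, (t * x ^ 2 + (2 - t * xR) * x))
        = (t / 3 * xR ^ 3 + (2 - t * xR) / 2 * xR ^ 2)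
          - (t / 3 * (-1) ^ 3 + (2 - t * xR) / 2 * (-1) ^ 2) := by
      refine intervalIntegral.integral_eq_sub_of_hasDerivAt
        (f := fun x : ℝ => t / 3 * x ^ 3 + (2 - t * xR) / 2 * x ^ 2) (fun x _ => ?_)
        (Continuous.intervalIntegrable (by fun_prop) _ _)
      have h3 : HasDerivAt (fun x : ℝ => x ^ 3) (3 * x ^ 2) x := by
        simpa using hasDerivAt_pow 3 x
      have h2 : HasDerivAt (fun x : ℝ => x ^ 2) (2 * x) x := by
        simpa using hasDerivAt_pow 2 x
      have := (h3.const_mul (t / 3)).add (h2.const_mul ((2 - t * xR) / 2))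
      exact this.congr_deriv (by ring)
    have p2 : (∫ x in xR..(1:ℝ), 2 * x) = (1:ℝ) ^ 2 - xR ^ 2 := by
      refine intervalIntegral.integral_eq_sub_of_hasDerivAt
        (f := fun x : ℝ => x ^ 2) (fun x _ => ?_)
        (Continuous.intervalIntegrable (by fun_prop) _ _)
      simpa using hasDerivAt_pow 2 x
    rw [e1, e2, p1, p2]; ring
  -- y-integral
  have hGy : Continuous (fun x : ℝ => ((g x) ^ 2 - 1) / 2) :=
    (((hgc.pow 2).sub continuous_const).div_const 2)
  have hvy : (∫ x in Set.Icc (-1:ℝ) 1, ((g x) ^ 2 - 1) / 2)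
      = t ^ 2 * (1 + xR) ^ 3 / 6 - t * (1 + xR) ^ 2 / 2 := by
    rw [integral_Icc_eq_integral_Ioc, ← intervalIntegral.integral_of_le (by norm_num : (-1:ℝ) ≤ 1)]
    rw [← intervalIntegral.integral_add_adjacent_intervals
      (hGy.intervalIntegrable (-1) xR) (hGy.intervalIntegrable xR 1)]
    have e1 : (∫ x in (-1:ℝ)..xR, ((g x) ^ 2 - 1) / 2)
        = ∫ x in (-1:ℝ)..xR, (t ^ 2 / 2 * x ^ 2 + (t - t ^ 2 * xR) * x
            + (t ^ 2 * xR ^ 2 / 2 - t * xR)) := by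
      refine intervalIntegral.integral_congr (fun x hx => ?_)
      rw [Set.uIcc_of_le hxRm] at hx
      have : g x = (x - xR) * t + 1 := by
        apply min_eq_right; nlinarith [hx.2]
      rw [this]; ring
    have e2 : (∫ x in xR..(1:ℝ), ((g x) ^ 2 - 1) / 2) = ∫ x in xR..(1:ℝ), (0:ℝ) := by
      refine intervalIntegral.integral_congr (fun x hx => ?_)
      rw [Set.uIcc_of_le hxR1] at hx
      have : g x = 1 := by
        apply min_eq_left; nlinarith [hx.1]
      rw [this]; ring
    have p1 : (∫ x in (-1:ℝ)..xR, (t ^ 2 / 2 * x ^ 2 + (t - t ^ 2 * xR) * x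
            + (t ^ 2 * xR ^ 2 / 2 - t * xR)))
        = (t ^ 2 / 6 * xR ^ 3 + (t - t ^ 2 * xR) / 2 * xR ^ 2
            + (t ^ 2 * xR ^ 2 / 2 - t * xR) * xR)
          - (t ^ 2 / 6 * (-1) ^ 3 + (t - t ^ 2 * xR) / 2 * (-1) ^ 2
            + (t ^ 2 * xR ^ 2 / 2 - t * xR) * (-1)) := by
      refine intervalIntegral.integral_eq_sub_of_hasDerivAt
        (f := fun x : ℝ => t ^ 2 / 6 * x ^ 3 + (t - t ^ 2 * xR) / 2 * x ^ 2
          + (t ^ 2 * xR ^ 2 / 2 - t * xR) * x) (fun x _ => ?_)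
        (Continuous.intervalIntegrable (by fun_prop) _ _)
      have h3 : HasDerivAt (fun x : ℝ => x ^ 3) (3 * x ^ 2) x := by
        simpa using hasDerivAt_pow 3 x
      have h2 : HasDerivAt (fun x : ℝ => x ^ 2) (2 * x) x := by
        simpa using hasDerivAt_pow 2 x
      have hid : HasDerivAt (fun x : ℝ => x) 1 x := hasDerivAt_id x
      have := ((h3.const_mul (t ^ 2 / 6)).add (h2.const_mul ((t - t ^ 2 * xR) / 2))).add
        (hid.const_mul (t ^ 2 * xR ^ 2 / 2 - t * xR))
      exact this.congr_deriv (by ring)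
    rw [e1, e2, p1, intervalIntegral.integral_zero]; ring
  rw [hvx, hvy]
  have hA : t / 3 + t * xR / 2 - t * xR ^ 3 / 6
      = 1 - (yL + 1) / 2 - ((xR ^ 3 + 1) / 6) * t := by
    rw [hyL]; ring
  have hB : t ^ 2 * (1 + xR) ^ 3 / 6 - t * (1 + xR) ^ 2 / 2
      = -1 + (1 - xR) / 2 + (1 - yL ^ 3) / (6 * t) := by
    rw [hyL]; field_simp; ring
  rw [hA, hB, Prod.smul_mk, smul_eq_mul, smul_eq_mul]
end
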